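/- If a second-order polynomial P contains at least one occurrence of Λ applied to an argument depending on N, then for any fixed n ≥ 1 the map ℓ ↦ ⟦P⟧(n,ℓ) is unbounded as ℓ ranges over nondecreasing functions ℕ → ℕ; more concretely, for the family ℓ_c(m) = c·(m+1), ⟦P⟧(n, ℓ_c) → ∞ as c → ∞. -/
import Mathlib


/-- Second-order polynomials over ℕ: terms over `1`, `N`, `+`, `·`, `Λ(·)`. -/
inductive SOP where
  | one : SOP
  | varN : SOP
  | add : SOP → SOP → SOP
  | mul : SOP → SOP → SOP
  | lam : SOP → SOP

/-- Semantics of a second-order polynomial at `n : ℕ` and `ℓ : ℕ → ℕ`. -/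
def SOP.eval : SOP → ℕ → (ℕ → ℕ) → ℕ
  | one, _, _ => 1
  | varN, n, _ => n
  | add P Q, n, l => P.eval n l + Q.eval n l
  | mul P Q, n, l => P.eval n l * Q.eval n l
  | lam P, n, l => l (P.eval n l)

/-- Does the second-order polynomial (really) depend on the variable `N`? -/
def SOP.dependsN : SOP → Bool
  | .one => false
  | .varN => true
  | .add P Q => P.dependsN || Q.dependsN
  | .mul P Q => P.dependsN || Q.dependsN
  | .lam P => P.dependsN

/-- Does `P` contain an occurrence of `Λ` applied to an argument depending on `N`? -/
def SOP.hasLamN : SOP → Bool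
  | .one => false
  | .varN => false
  | .add P Q => P.hasLamN || Q.hasLamN
  | .mul P Q => P.hasLamN || Q.hasLamN
  | .lam P => P.dependsN || P.hasLamN

lemma SOP.eval_pos (P : SOP) (n : ℕ) (hn : 1 ≤ n) (l : ℕ → ℕ)
    (hl : ∀ m, 1 ≤ l m) : 1 ≤ P.eval n l := by
  induction P with
  | one => exact le_refl _
  | varN => exact hn
  | add P Q ihP ihQ => simpa [SOP.eval] using Nat.le_add_right_of_le ihP
  | mul P Q ihP ihQ => exact Nat.mul_pos ihP ihQ
  | lam P ih => exact hl _

lemma SOP.eval_ge_c (P : SOP) (hP : P.hasLamN = true) (n : ℕ) (hn : 1 ≤ n)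
    (c : ℕ) (hc : 1 ≤ c) : c ≤ P.eval n (fun m => c * (m + 1)) := by
  have hl : ∀ m, 1 ≤ c * (m + 1) := fun m => Nat.one_le_iff_ne_zero.mpr
    (Nat.mul_ne_zero (by omega) (by omega))
  induction P with
  | one => simp [SOP.hasLamN] at hP
  | varN => simp [SOP.hasLamN] at hP
  | add P Q ihP ihQ =>
    simp only [SOP.hasLamN, Bool.or_eq_true] at hP
    rcases hP with h | h
    · exact le_trans (ihP h) (Nat.le_add_right _ _)
    · exact le_trans (ihQ h) (Nat.le_add_left _ _)
  | mul P Q ihP ihQ =>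
    simp only [SOP.hasLamN, Bool.or_eq_true] at hP
    rcases hP with h | h
    · exact le_trans (ihP h) (Nat.le_mul_of_pos_right _ (Q.eval_pos n hn _ hl))
    · exact le_trans (ihQ h) (Nat.le_mul_of_pos_left _ (P.eval_pos n hn _ hl))
  | lam P ih =>
    show c ≤ c * (P.eval n _ + 1)
    exact Nat.le_mul_of_pos_right _ (by omega)

/-- If `P` contains some `Λ` applied to an argument depending on `N`, then for
fixed `n ≥ 1` the map `ℓ ↦ ⟦P⟧(n,ℓ)` is unbounded over nondecreasing `ℓ`;
concretely, along the family `ℓ_c(m) = c·(m+1)` it tends to infinity. -/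
theorem SOP.unbounded_of_hasLamN (P : SOP) (hP : P.hasLamN = true)
    (n : ℕ) (hn : 1 ≤ n) :
    (∀ B : ℕ, ∃ l : ℕ → ℕ, Monotone l ∧ B < P.eval n l) ∧
    Filter.Tendsto (fun c : ℕ => P.eval n (fun m => c * (m + 1)))
      Filter.atTop Filter.atTop := by
  constructor
  · intro B
    refine ⟨fun m => (B + 1) * (m + 1), ?_, ?_⟩
    · intro a b hab
      exact Nat.mul_le_mul_left _ (by omega)
    · have := P.eval_ge_c hP n hn (B + 1) (by omega)
      omega
  · refine Filter.tendsto_atTop_mono' _ ?_ Filter.tendsto_id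
    filter_upwards [Filter.eventually_ge_atTop 1] with c hc
    exact P.eval_ge_c hP n hn c hc
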